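/- For a d-dimensional effect-modifying parameter with bandwidth h_n = C n^{-1/(4+d)} and ‖ζ̃_n‖ = c · h_n^{-d/2} n^{-1/2}, there exists α such that λ_n = n^α satisfies h_n^{-d/2} n^{-1/2} λ_n → 0 and h_n^{d/2} n^{-1/2} λ_n ‖ζ̃_n‖^{-γ} → ∞ if and only if γ > d/2. -/
import Mathlib

open Filter

private lemma aux_tendsto_zero (K β : ℝ) (hK : 0 < K) :
    Tendsto (fun n : ℕ => K * (n : ℝ) ^ β) atTop (nhds 0) ↔ β < 0 := by
  constructor
  · intro ht
    by_contra hb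
    push_neg at hb
    have h1 : ∀ᶠ n : ℕ in atTop, K ≤ K * (n : ℝ) ^ β := by
      filter_upwards [eventually_ge_atTop 1] with n hn
      have hx : (1 : ℝ) ≤ (n : ℝ) := by exact_mod_cast hn
      have h2 : (1 : ℝ) ≤ (n : ℝ) ^ β := by
        calc (1 : ℝ) = (n : ℝ) ^ (0 : ℝ) := (Real.rpow_zero _).symm
          _ ≤ _ := Real.rpow_le_rpow_of_exponent_le hx hb
      nlinarith
    have h2 := ht.eventually (Iio_mem_nhds hK)
    obtain ⟨n, hn1, hn2⟩ := (h1.and h2).exists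
    exact absurd (lt_of_le_of_lt hn1 hn2) (lt_irrefl K)
  · intro hb
    have h0 : Tendsto (fun x : ℝ => x ^ β) atTop (nhds 0) := by
      have := tendsto_rpow_neg_atTop (y := -β) (by linarith)
      simpa using this
    have := (h0.comp tendsto_natCast_atTop_atTop).const_mul K
    simpa using this

private lemma aux_tendsto_top (K β : ℝ) (hK : 0 < K) :
    Tendsto (fun n : ℕ => K * (n : ℝ) ^ β) atTop atTop ↔ 0 < β := by
  constructor
  · intro ht
    by_contra hb
    push_neg at hb
    have h1 : ∀ᶠ n : ℕ in atTop, K * (n : ℝ) ^ β ≤ K := by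
      filter_upwards [eventually_ge_atTop 1] with n hn
      have hx : (1 : ℝ) ≤ (n : ℝ) := by exact_mod_cast hn
      have h2 : (n : ℝ) ^ β ≤ 1 := by
        calc (n : ℝ) ^ β ≤ (n : ℝ) ^ (0 : ℝ) := Real.rpow_le_rpow_of_exponent_le hx hb
          _ = 1 := Real.rpow_zero _
      nlinarith
    have h2 := ht.eventually (eventually_gt_atTop K)
    obtain ⟨n, hn1, hn2⟩ := (h1.and h2).exists
    exact absurd (lt_of_lt_of_le hn2 hn1) (lt_irrefl K)
  · intro hb
    have h0 : Tendsto (fun x : ℝ => x ^ β) atTop atTop := tendsto_rpow_atTop hb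
    exact (h0.comp tendsto_natCast_atTop_atTop).const_mul_atTop hK

theorem lagr_tuning_condition_general_dim (d : ℕ) (hd : 1 ≤ d)
    (C c γ : ℝ) (hC : 0 < C) (hc : 0 < c) (hγ : 0 < γ) :
    let h : ℕ → ℝ := fun n => C * (n : ℝ) ^ (-(1 : ℝ) / (4 + d))
    let z : ℕ → ℝ := fun n => c * (h n) ^ (-(d : ℝ) / 2) * (n : ℝ) ^ (-(1 : ℝ) / 2)
    ((∃ α : ℝ,
        Tendsto (fun n => (h n) ^ (-(d : ℝ) / 2) * (n : ℝ) ^ (-(1 : ℝ) / 2) * (n : ℝ) ^ α)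
          atTop (nhds 0) ∧
        Tendsto (fun n => (h n) ^ ((d : ℝ) / 2) * (n : ℝ) ^ (-(1 : ℝ) / 2) * (n : ℝ) ^ α *
            (z n) ^ (-γ)) atTop atTop) ↔ (d : ℝ) / 2 < γ) := by
  intro h z
  have hdR : (1 : ℝ) ≤ (d : ℝ) := by exact_mod_cast hd
  have heR : (0 : ℝ) < 4 + (d : ℝ) := by linarith
  have hene : (4 + (d : ℝ)) ≠ 0 := ne_of_gt heR
  -- general power of h n
  have hE : ∀ n : ℕ, 1 ≤ n → ∀ p : ℝ,
      (h n) ^ p = C ^ p * (n : ℝ) ^ (-p / (4 + (d : ℝ))) := by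
    intro n hn p
    have hx1 : (1 : ℝ) ≤ (n : ℝ) := by exact_mod_cast hn
    have hx0 : (0 : ℝ) < (n : ℝ) := by linarith
    simp only [h]
    rw [Real.mul_rpow hC.le (Real.rpow_nonneg hx0.le _), ← Real.rpow_mul hx0.le]
    congr 1
    ring
  set K1 : ℝ := C ^ (-(d : ℝ) / 2) with hK1
  set Kz : ℝ := c * C ^ (-(d : ℝ) / 2) with hKz
  set K2 : ℝ := C ^ ((d : ℝ) / 2) * Kz ^ (-γ) with hK2
  have hK1pos : 0 < K1 := Real.rpow_pos_of_pos hC _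
  have hKzpos : 0 < Kz := by positivity
  have hK2pos : 0 < K2 := by positivity
  -- z in power form
  have hzE : ∀ n : ℕ, 1 ≤ n → z n = Kz * (n : ℝ) ^ (-2 / (4 + (d : ℝ))) := by
    intro n hn
    have hx1 : (1 : ℝ) ≤ (n : ℝ) := by exact_mod_cast hn
    have hx0 : (0 : ℝ) < (n : ℝ) := by linarith
    simp only [z]
    rw [hE n hn]
    rw [show c * (C ^ (-(d : ℝ) / 2) * (n : ℝ) ^ (-(-(d : ℝ) / 2) / (4 + (d : ℝ)))) *
        (n : ℝ) ^ (-(1 : ℝ) / 2) = Kz *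
        ((n : ℝ) ^ (-(-(d : ℝ) / 2) / (4 + (d : ℝ))) * (n : ℝ) ^ (-(1 : ℝ) / 2)) from by
          rw [hKz]; ring]
    rw [← Real.rpow_add hx0]
    congr 1
    congr 1
    field_simp
    ring
  have E1 : ∀ α : ℝ,
      (fun n : ℕ => (h n) ^ (-(d : ℝ) / 2) * (n : ℝ) ^ (-(1 : ℝ) / 2) * (n : ℝ) ^ α)
        =ᶠ[atTop] (fun n : ℕ => K1 * (n : ℝ) ^ (α - 2 / (4 + (d : ℝ)))) := by
    intro α
    filter_upwards [eventually_ge_atTop 1] with n hn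
    have hx1 : (1 : ℝ) ≤ (n : ℝ) := by exact_mod_cast hn
    have hx0 : (0 : ℝ) < (n : ℝ) := by linarith
    rw [hE n hn]
    rw [show C ^ (-(d : ℝ) / 2) * (n : ℝ) ^ (-(-(d : ℝ) / 2) / (4 + (d : ℝ))) *
        (n : ℝ) ^ (-(1 : ℝ) / 2) * (n : ℝ) ^ α = K1 *
        ((n : ℝ) ^ (-(-(d : ℝ) / 2) / (4 + (d : ℝ))) * (n : ℝ) ^ (-(1 : ℝ) / 2) *
          (n : ℝ) ^ α) from by rw [hK1]; ring]
    rw [← Real.rpow_add hx0, ← Real.rpow_add hx0]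
    congr 1
    congr 1
    field_simp
    ring
  have E2 : ∀ α : ℝ,
      (fun n : ℕ => (h n) ^ ((d : ℝ) / 2) * (n : ℝ) ^ (-(1 : ℝ) / 2) * (n : ℝ) ^ α *
          (z n) ^ (-γ))
        =ᶠ[atTop] (fun n : ℕ =>
          K2 * (n : ℝ) ^ (α + (2 * γ - 2 - (d : ℝ)) / (4 + (d : ℝ)))) := by
    intro α
    filter_upwards [eventually_ge_atTop 1] with n hn
    have hx1 : (1 : ℝ) ≤ (n : ℝ) := by exact_mod_cast hn
    have hx0 : (0 : ℝ) < (n : ℝ) := by linarith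
    rw [hE n hn, hzE n hn,
      Real.mul_rpow hKzpos.le (Real.rpow_nonneg hx0.le _), ← Real.rpow_mul hx0.le]
    rw [show C ^ ((d : ℝ) / 2) * (n : ℝ) ^ (-((d : ℝ) / 2) / (4 + (d : ℝ))) *
        (n : ℝ) ^ (-(1 : ℝ) / 2) * (n : ℝ) ^ α *
        (Kz ^ (-γ) * (n : ℝ) ^ (-2 / (4 + (d : ℝ)) * -γ)) = K2 *
        ((n : ℝ) ^ (-((d : ℝ) / 2) / (4 + (d : ℝ))) * (n : ℝ) ^ (-(1 : ℝ) / 2) *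
          (n : ℝ) ^ α * (n : ℝ) ^ (-2 / (4 + (d : ℝ)) * -γ)) from by rw [hK2]; ring]
    rw [← Real.rpow_add hx0, ← Real.rpow_add hx0, ← Real.rpow_add hx0]
    congr 1
    congr 1
    field_simp
    ring
  constructor
  · rintro ⟨α, h1, h2⟩
    have b1 : α - 2 / (4 + (d : ℝ)) < 0 :=
      (aux_tendsto_zero K1 _ hK1pos).mp (h1.congr' (E1 α))
    have b2 : 0 < α + (2 * γ - 2 - (d : ℝ)) / (4 + (d : ℝ)) :=
      (aux_tendsto_top K2 _ hK2pos).mp (h2.congr' (E2 α))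
    have k1 : α * (4 + (d : ℝ)) < 2 := by
      have hα : α < 2 / (4 + (d : ℝ)) := by linarith
      exact (lt_div_iff₀ heR).mp hα
    have k2 : 2 + (d : ℝ) - 2 * γ < α * (4 + (d : ℝ)) := by
      have hα : (2 + (d : ℝ) - 2 * γ) / (4 + (d : ℝ)) < α := by
        have : -((2 * γ - 2 - (d : ℝ)) / (4 + (d : ℝ))) < α := by linarith
        rw [← neg_div] at this
        have hnum : -(2 * γ - 2 - (d : ℝ)) = 2 + (d : ℝ) - 2 * γ := by ring
        rwa [hnum] at this
      exact (div_lt_iff₀ heR).mp hα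
    linarith
  · intro hγd
    refine ⟨(2 + (d : ℝ) - 2 * γ + 2) / (2 * (4 + (d : ℝ))), ?_, ?_⟩
    · refine Tendsto.congr' (E1 _).symm ((aux_tendsto_zero K1 _ hK1pos).mpr ?_)
      have : (2 + (d : ℝ) - 2 * γ + 2) / (2 * (4 + (d : ℝ))) - 2 / (4 + (d : ℝ)) =
          ((d : ℝ) - 2 * γ) / (2 * (4 + (d : ℝ))) := by
        field_simp
        ring
      rw [this]
      apply div_neg_of_neg_of_pos <;> linarith
    · refine Tendsto.congr' (E2 _).symm ((aux_tendsto_top K2 _ hK2pos).mpr ?_)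
      have : (2 + (d : ℝ) - 2 * γ + 2) / (2 * (4 + (d : ℝ))) +
          (2 * γ - 2 - (d : ℝ)) / (4 + (d : ℝ)) =
          (2 * γ - (d : ℝ)) / (2 * (4 + (d : ℝ))) := by
        field_simp
        ring
      rw [this]
      apply div_pos <;> linarith
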